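/- arXiv:cs/0609161 — 2 statements merged into one kernel-verified Lean document; each statement's English description precedes it below -/
import Mathlib

section
/- Let λ be the enumeration of Λ^m. If 0 ≤ t < q^⌊m/2⌋ − 1 and l = ⌊log_q(t+1)⌋, then λ(t) = q^{m−2l−1}(c_{2l+1} + t + 1 − q^l), where c_{2l+1} = q^{2l+1} − q^{l+1}. -/
/-!
Below its conductor `c_{n+1}`, the semigroup `Λ^{n+1}` is exactly `q·Λ^n`, so counting the
elements of `Λ^{2l+1+j}` below `q^j w` reduces to counting those of `Λ^{2l+1}` below `w`, as
long as `q w ≤ c_{2l+2}`. Take `w = c_{2l+1} + s` with `s = t + 1 - q^l < q^{l+1} - q^l`: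
everything from `c_{2l+1}` on lies in `Λ^{2l+1}`, and the same reduction shows by induction
on `l` that exactly `q^l - 1` elements of `Λ^{2l+1}` lie below `c_{2l+1}`. Hence exactly `t`
elements of `Λ^m` lie below `q^{m-2l-1} w ∈ Λ^m`, which is therefore `λ(t)`.
-/

/-- The Garcia–Stichtenoth tower of Weierstrass semigroups:
`Λ¹ = ℕ₀`, `Λᵐ = q·Λ^{m-1} ∪ {i : i ≥ qᵐ - q^⌊(m+1)/2⌋}` for `m ≥ 2`. -/
def GSsemigroup (q : ℕ) : ℕ → Set ℕ
  | 0 => Set.univ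
  | 1 => Set.univ
  | (m + 2) => (fun x => q * x) '' GSsemigroup q (m + 1) ∪
      {i : ℕ | q ^ (m + 2) - q ^ ((m + 3) / 2) ≤ i}

/-- `c_m = q^m - q^⌊(m+1)/2⌋`, the conductor of `Λ^m`. -/
def gsC (q m : ℕ) : ℕ := q ^ m - q ^ ((m + 1) / 2)

/-- `g_m = (q^⌊(m+1)/2⌋ - 1)(q^⌈(m-1)/2⌉ - 1)`, the genus of `Λ^m`
(note `⌈(m-1)/2⌉ = ⌊m/2⌋` for `m ≥ 1`). -/
def gsG (q m : ℕ) : ℕ := (q ^ ((m + 1) / 2) - 1) * (q ^ (m / 2) - 1)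

/-- `A_i = {j : q^{2i-1} - q^i ≤ j ≤ q^{2i-1} - q^{i-1} - 1}`. -/
def gsA (q i : ℕ) : Set ℕ :=
  {j : ℕ | q ^ (2 * i - 1) - q ^ i ≤ j ∧ j ≤ q ^ (2 * i - 1) - q ^ (i - 1) - 1}

/-- The enumeration `λ` of `Λ^m`: the increasing bijection `ℕ₀ → Λ^m`. -/
noncomputable def gsEnum (q m : ℕ) : ℕ → ℕ := Nat.nth (fun n => n ∈ GSsemigroup q m)

/-- `ν_i = #{j : λ_i - λ_j ∈ Λ^m}` (the subtraction being in `ℤ`,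
i.e. `∃ a ∈ Λ^m, λ_j + a = λ_i`). -/
noncomputable def gsNu (q m i : ℕ) : ℕ :=
  Set.ncard {j : ℕ | ∃ a ∈ GSsemigroup q m, gsEnum q m j + a = gsEnum q m i}

/-- The order (Feng–Rao) bound `δ_i = min {ν_j : j > i}`. -/
noncomputable def gsDelta (q m i : ℕ) : ℕ := sInf (gsNu q m '' {j : ℕ | i < j})

/-- The semigroup floor `⌊k⌋_{Λ^m}`: the largest element of `Λ^m` not exceeding `k`. -/
noncomputable def gsFloor (q m k : ℕ) : ℕ := sSup {x ∈ GSsemigroup q m | x ≤ k}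

/-- `λ⁻¹(x)` for `x ∈ Λ^m`: the number of elements of `Λ^m` below `x`. -/
noncomputable def gsLinv (q m x : ℕ) : ℕ := Set.ncard {y ∈ GSsemigroup q m | y < x}

open scoped Classical

lemma gsC_two_mul_add_three (q l : ℕ) : gsC q (2 * l + 3) = q * gsC q (2 * l + 2) := by
  simp only [gsC, show (2 * l + 3 + 1) / 2 = l + 1 + 1 by omega,
    show (2 * l + 2 + 1) / 2 = l + 1 by omega, Nat.mul_sub, ← pow_succ']

lemma gsC_two_mul_add_two {q : ℕ} (hq : 0 < q) (l : ℕ) :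
    gsC q (2 * l + 2) = q * (gsC q (2 * l + 1) + (q ^ (l + 1) - q ^ l)) := by
  have hl : q ^ l ≤ q ^ (l + 1) := Nat.pow_le_pow_right hq (by omega)
  have hl' : q ^ (l + 1) ≤ q ^ (2 * l + 1) := Nat.pow_le_pow_right hq (by omega)
  have hsum : q ^ (2 * l + 1) - q ^ (l + 1) + (q ^ (l + 1) - q ^ l) = q ^ (2 * l + 1) - q ^ l := by
    omega
  simp only [gsC, show (2 * l + 2 + 1) / 2 = l + 1 by omega,
    show (2 * l + 1 + 1) / 2 = l + 1 by omega, hsum, Nat.mul_sub, ← pow_succ']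

lemma mul_gsC_le_gsC_succ {q : ℕ} (hq : 0 < q) (n : ℕ) : q * gsC q n ≤ gsC q (n + 1) := by
  simp only [gsC, Nat.mul_sub, ← pow_succ']
  exact Nat.sub_le_sub_left (Nat.pow_le_pow_right hq (by omega)) _

lemma pow_mul_gsC_le_gsC_add {q : ℕ} (hq : 0 < q) (n j : ℕ) :
    q ^ j * gsC q n ≤ gsC q (n + j) := by
  induction j with
  | zero => simp
  | succ j ih =>
    calc q ^ (j + 1) * gsC q n = q * (q ^ j * gsC q n) := by ring
      _ ≤ q * gsC q (n + j) := Nat.mul_le_mul_left q ih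
      _ ≤ gsC q (n + (j + 1)) := mul_gsC_le_gsC_succ hq (n + j)

lemma mem_GSsemigroup_of_gsC_le {q m n : ℕ} (hm : 1 ≤ m) (h : gsC q m ≤ n) :
    n ∈ GSsemigroup q m := by
  match m, hm with
  | 1, _ => trivial
  | k + 2, _ => exact Or.inr h

lemma mul_mem_GSsemigroup_succ {q n x : ℕ} (hn : 1 ≤ n) (hx : x ∈ GSsemigroup q n) :
    q * x ∈ GSsemigroup q (n + 1) := by
  match n, hn with
  | k + 1, _ => exact Or.inl ⟨x, hx, rfl⟩

lemma pow_mul_mem_GSsemigroup_add {q n x : ℕ} (hn : 1 ≤ n) (hx : x ∈ GSsemigroup q n)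
    (j : ℕ) :
    q ^ j * x ∈ GSsemigroup q (n + j) := by
  induction j with
  | zero => simpa using hx
  | succ j ih =>
    rw [pow_succ', mul_assoc]
    exact mul_mem_GSsemigroup_succ (n := n + j) (by omega) ih

lemma exists_mul_eq_of_mem_GSsemigroup_succ {q n y : ℕ} (hn : 1 ≤ n)
    (hy : y ∈ GSsemigroup q (n + 1)) (hlt : y < gsC q (n + 1)) :
    ∃ x ∈ GSsemigroup q n, q * x = y := by
  match n, hn with
  | k + 1, _ =>
    rcases hy with hy | hy
    · exact hy
    · exact absurd hy (Nat.not_le.mpr hlt)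

lemma count_GSsemigroup_succ_mul {q n N : ℕ} (hq : 0 < q) (hn : 1 ≤ n)
    (hN : q * N ≤ gsC q (n + 1)) :
    Nat.count (· ∈ GSsemigroup q (n + 1)) (q * N) = Nat.count (· ∈ GSsemigroup q n) N := by
  simp only [Nat.count_eq_card_filter_range]
  have hfilter : (Finset.range (q * N)).filter (· ∈ GSsemigroup q (n + 1)) =
      ((Finset.range N).filter (· ∈ GSsemigroup q n)).image (q * ·) := by
    ext y
    simp only [Finset.mem_filter, Finset.mem_range, Finset.mem_image]
    constructor
    · rintro ⟨hyN, hy⟩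
      obtain ⟨x, hx, rfl⟩ := exists_mul_eq_of_mem_GSsemigroup_succ hn hy (by omega)
      exact ⟨x, ⟨(Nat.mul_lt_mul_left hq).mp hyN, hx⟩, rfl⟩
    · rintro ⟨x, ⟨hxN, hx⟩, rfl⟩
      exact ⟨(Nat.mul_lt_mul_left hq).mpr hxN, mul_mem_GSsemigroup_succ hn hx⟩
  rw [hfilter, Finset.card_image_of_injective _ (mul_right_injective₀ hq.ne')]

lemma count_GSsemigroup_add_pow_mul {q n w : ℕ} (hq : 0 < q) (hn : 1 ≤ n)
    (hw : q * w ≤ gsC q (n + 1)) (j : ℕ) :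
    Nat.count (· ∈ GSsemigroup q (n + j)) (q ^ j * w) =
      Nat.count (· ∈ GSsemigroup q n) w := by
  induction j with
  | zero => simp
  | succ j ih =>
    have hle : q * (q ^ j * w) ≤ gsC q (n + j + 1) :=
      calc q * (q ^ j * w) = q ^ j * (q * w) := by ring
        _ ≤ q ^ j * gsC q (n + 1) := Nat.mul_le_mul_left _ hw
        _ ≤ gsC q (n + 1 + j) := pow_mul_gsC_le_gsC_add hq (n + 1) j
        _ = gsC q (n + j + 1) := by rw [Nat.add_right_comm]
    rw [pow_succ', mul_assoc, ← add_assoc, count_GSsemigroup_succ_mul hq (by omega) hle, ih]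

lemma count_GSsemigroup_gsC_add {q m : ℕ} (hm : 1 ≤ m) (s : ℕ) :
    Nat.count (· ∈ GSsemigroup q m) (gsC q m + s) =
      Nat.count (· ∈ GSsemigroup q m) (gsC q m) + s := by
  induction s with
  | zero => rfl
  | succ s ih =>
    rw [← add_assoc, Nat.count_succ, ih, if_pos (mem_GSsemigroup_of_gsC_le hm (by omega)),
      add_assoc]

lemma count_GSsemigroup_gsC_two_mul_add_one {q : ℕ} (hq : 0 < q) (l : ℕ) :
    Nat.count (· ∈ GSsemigroup q (2 * l + 1)) (gsC q (2 * l + 1)) = q ^ l - 1 := by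
  induction l with
  | zero => simp [gsC]
  | succ l ih =>
    have hpos : 1 ≤ q ^ l := Nat.one_le_pow _ _ hq
    have hl : q ^ l ≤ q ^ (l + 1) := Nat.pow_le_pow_right hq (by omega)
    have h3 := gsC_two_mul_add_three q l
    have h2 := gsC_two_mul_add_two hq l
    rw [show 2 * (l + 1) + 1 = 2 * l + 2 + 1 by omega, h3,
      count_GSsemigroup_succ_mul hq (by omega) (by rw [← h3]), h2,
      count_GSsemigroup_succ_mul hq (by omega) (by rw [← h2]),
      count_GSsemigroup_gsC_add (by omega), ih]
    omega

theorem stmt8_general (q : ℕ) (hq : 2 ≤ q) (m : ℕ) (t : ℕ)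
    (ht : t + 1 < q ^ (m / 2)) :
    gsEnum q m t =
      q ^ (m - 2 * Nat.log q (t + 1) - 1) *
        (gsC q (2 * Nat.log q (t + 1) + 1) + (t + 1 - q ^ (Nat.log q (t + 1)))) := by
  set l := Nat.log q (t + 1)
  have hq0 : 0 < q := by omega
  have hlow : q ^ l ≤ t + 1 := Nat.pow_log_le_self q (by omega)
  have hhigh : t + 1 < q ^ (l + 1) := Nat.lt_pow_succ_log_self (by omega) _
  have hlm : l < m / 2 := (Nat.pow_lt_pow_iff_right (by omega)).mp (hlow.trans_lt ht)
  clear_value l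
  obtain ⟨j, hj⟩ : ∃ j, m = 2 * l + 1 + j := ⟨m - 2 * l - 1, by omega⟩
  set w := gsC q (2 * l + 1) + (t + 1 - q ^ l)
  have hw : q * w ≤ gsC q (2 * l + 1 + 1) := by
    rw [gsC_two_mul_add_two hq0 l]
    exact Nat.mul_le_mul_left q (by omega)
  have hmem : q ^ j * w ∈ GSsemigroup q m :=
    hj ▸ pow_mul_mem_GSsemigroup_add (by omega)
      (mem_GSsemigroup_of_gsC_le (by omega) le_self_add) j
  have hcount : Nat.count (· ∈ GSsemigroup q m) (q ^ j * w) = t := by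
    rw [hj, count_GSsemigroup_add_pow_mul hq0 (by omega) hw,
      count_GSsemigroup_gsC_add (by omega), count_GSsemigroup_gsC_two_mul_add_one hq0]
    have hpos : 1 ≤ q ^ l := Nat.one_le_pow l q hq0
    omega
  rw [show m - 2 * l - 1 = j by omega, gsEnum, ← hcount]
  exact Nat.nth_count hmem

/-- for `0 ≤ t < q^⌊m/2⌋ - 1` and `l = ⌊log_q (t+1)⌋`,
`λ(t) = q^{m-2l-1} (c_{2l+1} + t + 1 - q^l)`. -/
theorem stmt8 (q : ℕ) (hq : 2 ≤ q) (m : ℕ) (hm : 1 ≤ m) (t : ℕ)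
    (ht : t + 1 < q ^ (m / 2)) :
    gsEnum q m t =
      q ^ (m - 2 * Nat.log q (t + 1) - 1) *
        (gsC q (2 * Nat.log q (t + 1) + 1) + (t + 1 - q ^ (Nat.log q (t + 1)))) :=
  stmt8_general q hq m t ht
end

section
/- Let λ be the enumeration of Λ^m and k ≥ 0 an integer. If k ≥ c_m then λ^{-1}(⌊k⌋_{Λ^m}) = k − g_m, and if k < c_m then λ^{-1}(⌊k⌋_{Λ^m}) = q^{l−1} − 1 + ⌊k / q^{m−2l+1}⌋ − c_{2l−1}, where l = m + 1 − ⌈log_q(q^m − k)⌉. -/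
/-!
Below the conductor `c_m` the semigroup `Λ^m` consists only of the multiples `q·Λ^{m-1}`, so for
`k < c_m` the number of elements of `Λ^m` that are `≤ k` equals the number of elements of
`Λ^{m-1}` that are `≤ ⌊k/q⌋`. The level `l` is exactly the one for which
`q^{m-l} < q^m - k ≤ q^{m+1-l}`: the descent stays below the conductors down to level `2l - 1`,
where `⌊k/q^{m-2l+1}⌋` has passed `c_{2l-1}`. At or above a conductor every integer belongs to the
semigroup, and the same descent shows that `Λ^m` has `q^⌊m/2⌋ - 1 = c_m - g_m` elements below
`c_m`, so there the count is `n - g_m`.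
-/

namespace Nat

variable {p : ℕ → Prop} [DecidablePred p]

theorem count_add_of_forall_le {c : ℕ} (hp : ∀ y, c ≤ y → p y) (n : ℕ) :
    count p (c + n) = count p c + n := by
  rw [count_add, count_of_forall fun y _ => hp _ (le_add_right c y)]

theorem count_succ_of_isGreatest {x k : ℕ} (h : IsGreatest {y | p y ∧ y ≤ k} x) :
    count p (k + 1) = count p x + 1 := by
  rw [← count_succ_eq_succ_count_iff.2 h.1.1]
  refine le_antisymm ?_ (count_monotone p (by have := h.1.2; omega))
  by_contra! hlt
  obtain ⟨y, hy, hpy⟩ := exists_of_count_lt_count hlt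
  rw [Set.mem_Ico] at hy
  have := h.2 ⟨hpy, by omega⟩
  omega

theorem count_congr {p' : ℕ → Prop} [DecidablePred p'] {n : ℕ} (h : ∀ y < n, p y ↔ p' y) :
    count p n = count p' n :=
  le_antisymm (count_mono_left fun y hy => (h y hy).1) (count_mono_left fun y hy => (h y hy).2)

theorem count_dvd_and_div {q : ℕ} (hq : 0 < q) (k : ℕ) :
    count (fun y => q ∣ y ∧ p (y / q)) (k + 1) = count p (k / q + 1) := by
  simp only [count_eq_card_filter_range]
  symm
  rw [← Finset.card_image_of_injective _ (mul_right_injective₀ hq.ne')]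
  congr 1
  ext y
  simp only [Finset.mem_filter, Finset.mem_range, Finset.mem_image, Nat.lt_succ_iff]
  constructor
  · rintro ⟨x, ⟨hxk, hx⟩, rfl⟩
    refine ⟨?_, dvd_mul_right q x, by rwa [mul_div_cancel_left₀ x hq.ne']⟩
    have := (Nat.le_div_iff_mul_le hq).1 hxk
    linarith
  · rintro ⟨hyk, ⟨x, rfl⟩, hx⟩
    rw [mul_div_cancel_left₀ x hq.ne'] at hx
    exact ⟨x, ⟨(Nat.le_div_iff_mul_le hq).2 (by linarith), hx⟩, rfl⟩

end Nat

section GSsemigroup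

open scoped Classical

theorem gsLinv_eq_count (q m x : ℕ) : gsLinv q m x = Nat.count (· ∈ GSsemigroup q m) x := by
  rw [gsLinv, Nat.count_eq_card_filter_range, ← Set.ncard_coe_finset]
  congr 1
  ext y
  simp [and_comm]

theorem zero_mem_GSsemigroup (q : ℕ) : ∀ m, 0 ∈ GSsemigroup q m
  | 0 | 1 => Set.mem_univ 0
  | m + 2 => Or.inl ⟨0, zero_mem_GSsemigroup q (m + 1), mul_zero q⟩

theorem mem_GSsemigroup_of_gsC_le_s11 (q : ℕ) : ∀ {m x : ℕ}, gsC q m ≤ x → x ∈ GSsemigroup q m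
  | 0, x, _ | 1, x, _ => Set.mem_univ x
  | _ + 2, _, h => Or.inr h

theorem mem_GSsemigroup_add_two_iff {q : ℕ} (hq : 0 < q) {m y : ℕ} (hy : y < gsC q (m + 2)) :
    y ∈ GSsemigroup q (m + 2) ↔ q ∣ y ∧ y / q ∈ GSsemigroup q (m + 1) := by
  have hy' : y ∉ {i : ℕ | q ^ (m + 2) - q ^ ((m + 3) / 2) ≤ i} := not_le.2 hy
  simp only [GSsemigroup, Set.mem_union, hy', or_false, Set.mem_image]
  constructor
  · rintro ⟨x, hx, rfl⟩
    rw [mul_div_cancel_left₀ x hq.ne']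
    exact ⟨dvd_mul_right q x, hx⟩
  · rintro ⟨hdvd, hy⟩
    exact ⟨y / q, hy, Nat.mul_div_cancel' hdvd⟩

theorem isGreatest_gsFloor (q m k : ℕ) :
    IsGreatest {x ∈ GSsemigroup q m | x ≤ k} (gsFloor q m k) :=
  ⟨Nat.sSup_mem ⟨0, zero_mem_GSsemigroup q m, k.zero_le⟩ ⟨k, fun _ hx => hx.2⟩,
    fun _ hx => le_csSup ⟨k, fun _ hx => hx.2⟩ hx⟩

theorem gsLinv_gsFloor_add_one (q m k : ℕ) :
    gsLinv q m (gsFloor q m k) + 1 = gsLinv q m (k + 1) := by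
  rw [gsLinv_eq_count, gsLinv_eq_count, Nat.count_succ_of_isGreatest (isGreatest_gsFloor q m k)]

theorem gsLinv_add_two_of_lt_gsC {q : ℕ} (hq : 0 < q) {m k : ℕ} (hk : k < gsC q (m + 2)) :
    gsLinv q (m + 2) (k + 1) = gsLinv q (m + 1) (k / q + 1) := by
  rw [gsLinv_eq_count, gsLinv_eq_count, ← Nat.count_dvd_and_div hq]
  exact Nat.count_congr fun y hy => mem_GSsemigroup_add_two_iff hq (by omega)

theorem gsLinv_gsC_add (q m n : ℕ) : gsLinv q m (gsC q m + n) = gsLinv q m (gsC q m) + n := by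
  rw [gsLinv_eq_count, gsLinv_eq_count,
    Nat.count_add_of_forall_le (fun _ => mem_GSsemigroup_of_gsC_le_s11 q)]

theorem gsC_add_two (q m : ℕ) : gsC q (m + 2) = q * (q ^ (m + 1) - q ^ ((m + 1) / 2)) := by
  rw [gsC, Nat.mul_sub, ← pow_succ', ← pow_succ']
  congr 2
  omega

theorem gsLinv_gsC {q : ℕ} (hq : 1 < q) : ∀ m, gsLinv q m (gsC q m) = q ^ (m / 2) - 1
  | 0 => by simp [gsC, gsLinv]
  | 1 => by simp [gsC, gsLinv]
  | m + 2 => by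
    set C := q ^ (m + 1) - q ^ ((m + 1) / 2)
    have hlt : q ^ ((m + 1) / 2) < q ^ (m + 1) := Nat.pow_lt_pow_right hq (by omega)
    have hle : q ^ ((m + 1) / 2) ≤ q ^ ((m + 2) / 2) := Nat.pow_le_pow_right hq.le (by omega)
    have hle' : q ^ ((m + 2) / 2) ≤ q ^ (m + 1) := Nat.pow_le_pow_right hq.le (by omega)
    have hC : C = gsC q (m + 1) + (q ^ ((m + 2) / 2) - q ^ ((m + 1) / 2)) := by
      rw [gsC, show (m + 1 + 1) / 2 = (m + 2) / 2 by omega]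
      omega
    have hC1 : 1 ≤ C := by omega
    have hqc : q ≤ gsC q (m + 2) := gsC_add_two q m ▸ Nat.le_mul_of_pos_right q hC1
    have hdiv : (gsC q (m + 2) - 1) / q = C - 1 :=
      Nat.div_eq_of_lt_le (by rw [Nat.sub_one_mul, mul_comm, ← gsC_add_two]; omega)
        (by rw [Nat.sub_add_cancel hC1, mul_comm, ← gsC_add_two]; omega)
    calc gsLinv q (m + 2) (gsC q (m + 2))
        = gsLinv q (m + 2) (gsC q (m + 2) - 1 + 1) := by rw [Nat.sub_add_cancel (by omega)]
      _ = gsLinv q (m + 1) C := by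
          rw [gsLinv_add_two_of_lt_gsC (by omega) (by omega), hdiv, Nat.sub_add_cancel hC1]
      _ = q ^ ((m + 2) / 2) - 1 := by
          have hpos : 1 ≤ q ^ ((m + 1) / 2) := Nat.one_le_pow _ _ (by omega)
          rw [hC, gsLinv_gsC_add, gsLinv_gsC hq (m + 1)]
          omega

theorem gsG_add_pow {q : ℕ} (hq : 0 < q) (m : ℕ) : gsG q m + q ^ (m / 2) = gsC q m + 1 := by
  have hmul : q ^ ((m + 1) / 2) * q ^ (m / 2) = q ^ m := by
    rw [← pow_add]
    congr 1
    omega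
  rw [gsG, gsC, ← hmul]
  obtain ⟨a, ha⟩ := Nat.exists_eq_add_of_le' (Nat.one_le_pow ((m + 1) / 2) q hq)
  obtain ⟨b, hb⟩ := Nat.exists_eq_add_of_le' (Nat.one_le_pow (m / 2) q hq)
  rw [ha, hb, Nat.add_sub_cancel, Nat.add_sub_cancel,
    show (a + 1) * (b + 1) = a * b + b + (a + 1) by ring, Nat.add_sub_cancel]
  ring

theorem gsLinv_of_gsC_le {q m n : ℕ} (hq : 1 < q) (hn : gsC q m ≤ n) :
    gsLinv q m n = n - gsG q m := by
  have hpos : 1 ≤ q ^ (m / 2) := Nat.one_le_pow _ _ (by omega)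
  have := gsG_add_pow (by omega : 0 < q) m
  rw [← Nat.add_sub_cancel' hn, gsLinv_gsC_add, gsLinv_gsC hq]
  omega

theorem gsLinv_two_mul_sub_one_add {q l : ℕ} (hq : 1 < q) (hl : 1 ≤ l) :
    ∀ d k, k + q ^ (l - 1 + d) < q ^ (2 * l - 1 + d) →
      gsLinv q (2 * l - 1 + d) (k + 1) = gsLinv q (2 * l - 1) (k / q ^ d + 1)
  | 0, k, _ => by simp
  | d + 1, k, hk => by
    have hlev : 2 * l - 1 + (d + 1) = 2 * l - 2 + d + 2 := by omega
    have hlev' : 2 * l - 2 + d + 1 = 2 * l - 1 + d := by omega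
    simp only [← add_assoc, pow_succ] at hk
    have hexp : q ^ ((2 * l - 1 + d + 1 + 1) / 2) ≤ q ^ (l - 1 + d) * q := by
      rw [← pow_succ]
      exact Nat.pow_le_pow_right hq.le (by omega)
    have hkc : k < gsC q (2 * l - 2 + d + 2) := by
      rw [← hlev, gsC, ← add_assoc, pow_succ]
      omega
    have hkq : k / q + q ^ (l - 1 + d) < q ^ (2 * l - 1 + d) := by
      have : q ^ (l - 1 + d) < q ^ (2 * l - 1 + d) := Nat.pow_lt_pow_right hq (by omega)
      have : k / q < q ^ (2 * l - 1 + d) - q ^ (l - 1 + d) :=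
        (Nat.div_lt_iff_lt_mul (by omega)).2 (by rw [Nat.sub_mul]; omega)
      omega
    rw [hlev, gsLinv_add_two_of_lt_gsC (by omega) hkc, hlev',
      gsLinv_two_mul_sub_one_add hq hl d (k / q) hkq, Nat.div_div_eq_div_mul, ← pow_succ']

theorem clog_bounds_of_lt_gsC {q m k l : ℕ} (hq : 1 < q) (hk : k < gsC q m)
    (hl : l = m + 1 - Nat.clog q (q ^ m - k)) :
    1 ≤ l ∧ 2 * l ≤ m ∧ k + q ^ (m - l) < q ^ m ∧ q ^ m ≤ k + q ^ (m + 1 - l) := by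
  have hpos : 1 ≤ q ^ ((m + 1) / 2) := Nat.one_le_pow _ _ (by omega)
  rw [gsC] at hk
  have hle : Nat.clog q (q ^ m - k) ≤ m := (Nat.clog_le_iff_le_pow hq).2 (by omega)
  have hgt : (m + 1) / 2 < Nat.clog q (q ^ m - k) := (Nat.lt_clog_iff_pow_lt hq).2 (by omega)
  have hlow := Nat.pow_pred_clog_lt_self hq (by omega : 1 < q ^ m - k)
  have hhigh := Nat.le_pow_clog hq (q ^ m - k)
  rw [Nat.pred_eq_sub_one, show Nat.clog q (q ^ m - k) - 1 = m - l by omega] at hlow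
  rw [show Nat.clog q (q ^ m - k) = m + 1 - l by omega] at hhigh
  refine ⟨by omega, by omega, by omega, by omega⟩

theorem gsLinv_add_one_of_lt_gsC {q m k l : ℕ} (hq : 1 < q) (hk : k < gsC q m)
    (hl : l = m + 1 - Nat.clog q (q ^ m - k)) :
    gsLinv q m (k + 1) = q ^ (l - 1) + k / q ^ (m - 2 * l + 1) - gsC q (2 * l - 1) := by
  obtain ⟨hl1, h2l, hlow, hhigh⟩ := clog_bounds_of_lt_gsC hq hk hl
  obtain ⟨d, rfl⟩ : ∃ d, m = 2 * l - 1 + d := ⟨m - (2 * l - 1), by omega⟩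
  have hc : gsC q (2 * l - 1) ≤ k / q ^ d := by
    rw [Nat.le_div_iff_mul_le (by positivity), gsC, Nat.sub_mul, ← pow_add, ← pow_add,
      show (2 * l - 1 + 1) / 2 + d = 2 * l - 1 + d + 1 - l by omega]
    omega
  have hg := gsG_add_pow (by omega : 0 < q) (2 * l - 1)
  rw [show (2 * l - 1) / 2 = l - 1 by omega] at hg
  rw [show 2 * l - 1 + d - 2 * l + 1 = d by omega,
    gsLinv_two_mul_sub_one_add hq hl1 d k (by rwa [show l - 1 + d = 2 * l - 1 + d - l by omega]),
    gsLinv_of_gsC_le hq (by omega : gsC q (2 * l - 1) ≤ k / q ^ d + 1)]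
  omega

end GSsemigroup

theorem stmt11_general (q : ℕ) (hq : 2 ≤ q) (m : ℕ) (k : ℕ) :
    (gsC q m ≤ k → gsLinv q m (gsFloor q m k) = k - gsG q m) ∧
    (k < gsC q m → ∀ l : ℕ, l = m + 1 - Nat.clog q (q ^ m - k) →
      gsLinv q m (gsFloor q m k) =
        q ^ (l - 1) - 1 + k / q ^ (m - 2 * l + 1) - gsC q (2 * l - 1)) := by
  have hfloor := gsLinv_gsFloor_add_one q m k
  refine ⟨fun hk => ?_, fun hk l hl => ?_⟩
  · rw [gsLinv_of_gsC_le (n := k + 1) hq (by omega)] at hfloor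
    omega
  · have hpos : 1 ≤ q ^ (l - 1) := Nat.one_le_pow _ _ (by omega)
    rw [gsLinv_add_one_of_lt_gsC hq hk hl] at hfloor
    omega

/-- `λ⁻¹(⌊k⌋_{Λ^m}) = k - g_m` for `k ≥ c_m`, and
`λ⁻¹(⌊k⌋_{Λ^m}) = q^{l-1} - 1 + ⌊k / q^{m-2l+1}⌋ - c_{2l-1}` for `k < c_m`,
where `l = m + 1 - ⌈log_q (q^m - k)⌉`. -/
theorem stmt11 (q : ℕ) (hq : 2 ≤ q) (m : ℕ) (hm : 1 ≤ m) (k : ℕ) :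
    (gsC q m ≤ k → gsLinv q m (gsFloor q m k) = k - gsG q m) ∧
    (k < gsC q m → ∀ l : ℕ, l = m + 1 - Nat.clog q (q ^ m - k) →
      gsLinv q m (gsFloor q m k) =
        q ^ (l - 1) - 1 + k / q ^ (m - 2 * l + 1) - gsC q (2 * l - 1)) :=
  stmt11_general q hq m k
end
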